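/- Let d be a squarefree positive integer with at least two prime factors. Then there are infinitely many positive integers n such that λ(n² + d) = −1. -/

import Mathlib

/-!
If `λ(n₀² + d) = -1` for a single `n₀`, then `t = n₀² + d` is not a square, and the units of
`ℤ[√t]` turn the solution `(n₀, 1)` of `x² + d = t y²` into infinitely many, each with
`λ(x² + d) = λ(t y²) = -1`.

Otherwise `λ(n² + d) = 1` for all `n > 0`; Brahmagupta's identity
`(X² + dY²)(m² + d) = (Xm + dY)² + d(X - mY)²`, with `|X - mY| < Y`, then gives `λ = 1` on every
value of `X² + dY²` by descent on `Y`. Now take a prime `r ≡ 1 (mod 4d)`. By quadratic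
reciprocity `-d ≡ c² (mod r)`, and a pigeonhole argument yields small `ξ, η, ζ`, not all zero,
with `ξ ≡ cη (mod r)` and `ξ ≡ ζ (mod d)`. Then `rd ∣ ξ² + dη² - rζ²`, and since `d` is not a
square the size bounds leave only `ξ² + dη² = r(ζ² + dk²)` with `k ∈ {0, 1}`. The two sides have
opposite `λ`.
-/

/-- The Liouville function: `λ(n) = (-1)^Ω(n)` where `Ω(n)` counts prime factors
of `n` with multiplicity. -/
def liouvilleFun (n : ℕ) : ℤ := (-1) ^ n.primeFactorsList.length

open ArithmeticFunction ArithmeticFunction.Omega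

lemma liouvilleFun_eq_neg_one_pow (n : ℕ) : liouvilleFun n = (-1) ^ Ω n := by
  rw [cardFactors_apply]; rfl

lemma liouvilleFun_eq_one_or_eq_neg_one (n : ℕ) :
    liouvilleFun n = 1 ∨ liouvilleFun n = -1 := by
  rw [liouvilleFun_eq_neg_one_pow]; exact neg_one_pow_eq_or ℤ _

lemma liouvilleFun_mul {m n : ℕ} (hm : m ≠ 0) (hn : n ≠ 0) :
    liouvilleFun (m * n) = liouvilleFun m * liouvilleFun n := by
  simp only [liouvilleFun_eq_neg_one_pow, cardFactors_mul hm hn, pow_add]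

lemma liouvilleFun_sq (n : ℕ) : liouvilleFun (n ^ 2) = 1 := by
  rw [liouvilleFun_eq_neg_one_pow, cardFactors_pow, pow_mul]; norm_num

lemma liouvilleFun_mul_sq (n : ℕ) {m : ℕ} (hm : m ≠ 0) :
    liouvilleFun (n * m ^ 2) = liouvilleFun n := by
  rcases eq_or_ne n 0 with rfl | hn
  · simp
  · rw [liouvilleFun_mul hn (pow_ne_zero 2 hm), liouvilleFun_sq, mul_one]

lemma liouvilleFun_prime_mul {p n : ℕ} (hp : p.Prime) (hn : n ≠ 0) :
    liouvilleFun (p * n) = -liouvilleFun n := by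
  rw [liouvilleFun_mul hp.ne_zero hn, liouvilleFun_eq_neg_one_pow p, cardFactors_apply_prime hp]
  ring

lemma not_isSquare_of_liouvilleFun_eq_neg_one {n : ℕ} (h : liouvilleFun n = -1) :
    ¬IsSquare n := by
  rintro ⟨k, rfl⟩
  rw [← sq, liouvilleFun_sq] at h
  norm_num at h

lemma exists_gt_sq_add_eq_mul_sq {d t x y : ℕ} (ht : ¬IsSquare t) (hx : 0 < x)
    (h : x ^ 2 + d = t * y ^ 2) : ∃ x' y' : ℕ, x < x' ∧ x' ^ 2 + d = t * y' ^ 2 := by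
  have ht0 : (0 : ℤ) < t := by
    have : t ≠ 0 := by rintro rfl; exact ht ⟨0, rfl⟩
    positivity
  obtain ⟨a, hax, hay⟩ :=
    Pell.Solution₁.exists_pos_of_not_isSquare ht0 (Int.isSquare_natCast_iff.not.mpr ht)
  obtain ⟨u, hu⟩ : ∃ u : ℕ, (u : ℤ) = a.x := ⟨a.x.toNat, Int.toNat_of_nonneg (by linarith)⟩
  obtain ⟨v, hv⟩ : ∃ v : ℕ, (v : ℤ) = a.y := ⟨a.y.toNat, Int.toNat_of_nonneg hay.le⟩
  have hpell : (u : ℤ) ^ 2 - t * v ^ 2 = 1 := by rw [hu, hv]; exact a.prop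
  -- multiplication by the unit `u + v √t` of norm `1` preserves the norm `x ^ 2 - t y ^ 2`
  refine ⟨u * x + t * v * y, v * x + u * y, ?_, ?_⟩
  · have hux : 2 * x ≤ u * x := Nat.mul_le_mul_right x (by omega)
    omega
  · zify at h ⊢
    linear_combination (x ^ 2 - t * y ^ 2 : ℤ) * hpell + h

lemma infinite_setOf_liouvilleFun_sq_add_eq_neg_one_of_mem {d n₀ : ℕ} (hn₀ : 0 < n₀)
    (h : liouvilleFun (n₀ ^ 2 + d) = -1) :
    {n : ℕ | 0 < n ∧ liouvilleFun (n ^ 2 + d) = -1}.Infinite := by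
  set t := n₀ ^ 2 + d
  set S := {x : ℕ | 0 < x ∧ ∃ y, x ^ 2 + d = t * y ^ 2}
  have hS : S ⊆ {n : ℕ | 0 < n ∧ liouvilleFun (n ^ 2 + d) = -1} := by
    rintro x ⟨hx, y, hxy⟩
    have hy : y ≠ 0 := by
      rintro rfl
      rw [zero_pow two_ne_zero, mul_zero] at hxy
      have := pow_pos hx 2
      omega
    exact ⟨hx, by rw [hxy, liouvilleFun_mul_sq t hy, h]⟩
  refine Set.Infinite.mono hS fun hfin => ?_
  obtain ⟨m, ⟨hm, y, hmy⟩, hmax⟩ :=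
    Set.exists_max_image S id hfin ⟨n₀, hn₀, 1, by rw [one_pow, mul_one]⟩
  obtain ⟨x', y', hmx', hx'⟩ :=
    exists_gt_sq_add_eq_mul_sq (not_isSquare_of_liouvilleFun_eq_neg_one h) hm hmy
  exact (hmax x' ⟨hm.trans hmx', y', hx'⟩).not_gt hmx'

lemma exists_pos_natAbs_sub_mul_lt {X Y : ℕ} (hX : 0 < X) (hY : 0 < Y) :
    ∃ m : ℕ, 0 < m ∧ ((X : ℤ) - m * Y).natAbs < Y := by
  rcases lt_or_ge X Y with hXY | hXY
  · exact ⟨1, one_pos, by omega⟩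
  · refine ⟨X / Y, Nat.div_pos hXY hY, ?_⟩
    have : (X : ℤ) - (X / Y : ℕ) * Y = (X % Y : ℕ) := by
      push_cast
      rw [Int.emod_def]
      ring
    rw [this, Int.natAbs_natCast]
    exact Nat.mod_lt X hY

lemma liouvilleFun_sq_add_mul_sq_eq_one_of_pos {d : ℕ}
    (h : ∀ n, 0 < n → liouvilleFun (n ^ 2 + d) = 1) {X : ℕ} (hX : 0 < X) (Y : ℕ) :
    liouvilleFun (X ^ 2 + d * Y ^ 2) = 1 := by
  induction Y using Nat.strong_induction_on generalizing X with
  | _ Y ih =>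
  rcases Nat.eq_zero_or_pos Y with rfl | hY
  · simpa using liouvilleFun_sq X
  obtain ⟨m, hm, hj⟩ := exists_pos_natAbs_sub_mul_lt hX hY
  set j := ((X : ℤ) - m * Y).natAbs
  -- Brahmagupta's identity
  have hcomp : (X ^ 2 + d * Y ^ 2) * (m ^ 2 + d) = (X * m + d * Y) ^ 2 + d * j ^ 2 := by
    zify
    rw [Int.natAbs_sq]
    ring
  have hmul := liouvilleFun_mul (m := X ^ 2 + d * Y ^ 2) (n := m ^ 2 + d) (by positivity)
    (by positivity)
  rwa [hcomp, ih j hj (by positivity), h m hm, mul_one, eq_comm] at hmul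

lemma liouvilleFun_eq_one_of_forall_sq_add_eq_one {d : ℕ} (hd : d ≠ 0)
    (h : ∀ n, 0 < n → liouvilleFun (n ^ 2 + d) = 1) : liouvilleFun d = 1 := by
  have hmul := liouvilleFun_mul hd d.add_one_ne_zero
  rwa [show d * (d + 1) = d ^ 2 + d by ring, show d + 1 = 1 ^ 2 + d by ring,
    h d (Nat.pos_of_ne_zero hd), h 1 one_pos, mul_one, eq_comm] at hmul

lemma liouvilleFun_sq_add_mul_sq_eq_one {d : ℕ} (hd : d ≠ 0)
    (h : ∀ n, 0 < n → liouvilleFun (n ^ 2 + d) = 1) (X Y : ℕ) :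
    liouvilleFun (X ^ 2 + d * Y ^ 2) = 1 := by
  rcases Nat.eq_zero_or_pos X with rfl | hX
  · rcases eq_or_ne Y 0 with rfl | hY
    · simp [liouvilleFun]
    rw [zero_pow two_ne_zero, zero_add, liouvilleFun_mul_sq d hY,
      liouvilleFun_eq_one_of_forall_sq_add_eq_one hd h]
  · exact liouvilleFun_sq_add_mul_sq_eq_one_of_pos h hX Y

lemma isSquare_natCast_prime_of_modEq_one {r p : ℕ} [Fact r.Prime] (hp : p.Prime)
    (h : r ≡ 1 [MOD 4 * p]) : IsSquare (p : ZMod r) := by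
  have hr4 : r % 4 = 1 := h.of_mul_right p
  rcases eq_or_ne p 2 with rfl | hp2
  · have hr8 : r % 8 = 1 := h
    simpa using (ZMod.exists_sq_eq_two_iff (by omega)).mpr (Or.inl hr8)
  · have := Fact.mk hp
    refine (ZMod.exists_sq_eq_prime_iff_of_mod_four_eq_one hr4 hp2).mpr ⟨1, ?_⟩
    simpa using (ZMod.natCast_eq_natCast_iff r 1 p).mpr (h.of_mul_left 4)

lemma isSquare_natCast_of_modEq_one {r : ℕ} [Fact r.Prime] (n : ℕ) (h : r ≡ 1 [MOD 4 * n]) :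
    IsSquare (n : ZMod r) := by
  induction n using Nat.recOnMul with
  | zero => exact ⟨0, by simp⟩
  | one => exact ⟨1, by simp⟩
  | prime p hp => exact isSquare_natCast_prime_of_modEq_one hp h
  | mul a b ha hb =>
    rw [Nat.cast_mul]
    exact (ha (h.of_dvd (mul_dvd_mul_left 4 (dvd_mul_right a b)))).mul
      (hb (h.of_dvd (mul_dvd_mul_left 4 (dvd_mul_left b a))))

lemma isSquare_neg_natCast_of_modEq_one {r : ℕ} [Fact r.Prime] (n : ℕ)
    (h : r ≡ 1 [MOD 4 * n]) : IsSquare (-(n : ZMod r)) := by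
  have hr4 : r % 4 = 1 := h.of_mul_right n
  have hneg : IsSquare (-1 : ZMod r) := ZMod.exists_sq_eq_neg_one_iff.mpr (by omega)
  simpa using hneg.mul (isSquare_natCast_of_modEq_one n h)

-- A three-variable form of Thue's lemma, by pigeonhole on `ZMod r × ZMod d`.
lemma exists_ne_zero_intCast_eq_mul {r d : ℕ} [NeZero r] [NeZero d] (c : ZMod r) {A B C : ℕ}
    (h : r * d < (A + 1) * (B + 1) * (C + 1)) :
    ∃ ξ η ζ : ℤ, (ξ, η, ζ) ≠ 0 ∧ (ξ : ZMod r) = c * η ∧ (ξ : ZMod d) = ζ ∧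
      |ξ| ≤ A ∧ |η| ≤ B ∧ |ζ| ≤ C := by
  let s := (Finset.range (A + 1) ×ˢ Finset.range (B + 1)) ×ˢ Finset.range (C + 1)
  let f : (ℕ × ℕ) × ℕ → ZMod r × ZMod d := fun p => (p.1.1 - c * p.1.2, p.1.1 - p.2)
  have hcard : (Finset.univ : Finset (ZMod r × ZMod d)).card < s.card := by
    simpa [s, Finset.card_product] using h
  obtain ⟨⟨⟨a, b⟩, e⟩, hp, ⟨⟨a', b'⟩, e'⟩, hp', hne, hf⟩ :=
    Finset.exists_ne_map_eq_of_card_lt_of_maps_to hcard (f := f) fun _ _ => Finset.mem_univ _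
  simp only [s, Finset.mem_product, Finset.mem_range] at hp hp'
  simp only [f, Prod.mk.injEq] at hf
  refine ⟨a - a', b - b', e - e', ?_, ?_, ?_, ?_, ?_, ?_⟩
  · simp only [ne_eq, Prod.mk_eq_zero, sub_eq_zero, Nat.cast_inj] at hne ⊢
    rintro ⟨rfl, rfl, rfl⟩
    exact hne rfl
  · push_cast
    linear_combination hf.1
  · push_cast
    linear_combination hf.2
  all_goals rw [abs_le]; omega

lemma sq_le_of_abs_le_sqrt {n : ℕ} {a : ℤ} (ha : |a| ≤ n.sqrt) : a ^ 2 ≤ n := by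
  calc a ^ 2 = |a| ^ 2 := (sq_abs a).symm
    _ ≤ (n.sqrt : ℤ) ^ 2 := by gcongr
    _ ≤ n := by exact_mod_cast Nat.sqrt_le' n

lemma sq_lt_of_abs_le_sqrt {n : ℕ} (hn : ¬IsSquare n) {a : ℤ} (ha : |a| ≤ n.sqrt) :
    a ^ 2 < n := by
  refine (sq_le_of_abs_le_sqrt ha).lt_of_ne fun h => hn ⟨a.natAbs, ?_⟩
  zify
  rw [← sq, sq_abs, h]

lemma lt_sqrt_add_one_mul_sqrt_add_one_mul_sqrt_add_one (r d : ℕ) :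
    r * d < ((r * d).sqrt + 1) * (r.sqrt + 1) * (d.sqrt + 1) := by
  refine lt_of_pow_lt_pow_left₀ 2 (by positivity) ?_
  calc (r * d) ^ 2 = (r * d) * r * d := by ring
    _ < ((r * d).sqrt + 1) ^ 2 * (r.sqrt + 1) ^ 2 * (d.sqrt + 1) ^ 2 := by
      gcongr <;> exact Nat.lt_succ_sqrt' _
    _ = _ := by ring

lemma exists_mul_dvd_sq_add_mul_sq_sub_mul_sq {d r : ℕ} (hd : ¬IsSquare d) (hr : ¬IsSquare r)
    (hrd : r ≡ 1 [MOD d]) {c : ZMod r} (hc : c ^ 2 = -d) :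
    ∃ ξ η ζ : ℤ, (ξ, η, ζ) ≠ 0 ∧ ξ ^ 2 ≤ r * d ∧ η ^ 2 < r ∧ ζ ^ 2 < d ∧
      (r * d : ℤ) ∣ ξ ^ 2 + d * η ^ 2 - r * ζ ^ 2 := by
  have : NeZero r := ⟨by rintro rfl; exact hr ⟨0, rfl⟩⟩
  have : NeZero d := ⟨by rintro rfl; exact hd ⟨0, rfl⟩⟩
  obtain ⟨ξ, η, ζ, hne, hξr, hξd, hξ, hη, hζ⟩ :=
    exists_ne_zero_intCast_eq_mul c (lt_sqrt_add_one_mul_sqrt_add_one_mul_sqrt_add_one r d)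
  refine ⟨ξ, η, ζ, hne, by exact_mod_cast sq_le_of_abs_le_sqrt hξ, sq_lt_of_abs_le_sqrt hr hη,
    sq_lt_of_abs_le_sqrt hd hζ, ?_⟩
  have hcop : IsCoprime (r : ℤ) d := Nat.isCoprime_iff_coprime.mpr (by simpa using hrd.gcd_eq)
  refine hcop.mul_dvd ?_ ?_ <;> rw [← ZMod.intCast_zmod_eq_zero_iff_dvd] <;> push_cast
  · rw [hξr, ZMod.natCast_self]
    linear_combination η ^ 2 * hc
  · have hr1 : (r : ZMod d) = 1 := by simpa using (ZMod.natCast_eq_natCast_iff r 1 d).mpr hrd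
    rw [hξd, hr1, ZMod.natCast_self]
    ring

lemma exists_sq_add_mul_sq_eq_mul {d r : ℕ} (hd : ¬IsSquare d) (hr : ¬IsSquare r)
    (hrd : r ≡ 1 [MOD d]) {c : ZMod r} (hc : c ^ 2 = -d) :
    ∃ x y z w : ℕ, z ^ 2 + d * w ^ 2 ≠ 0 ∧ x ^ 2 + d * y ^ 2 = r * (z ^ 2 + d * w ^ 2) := by
  obtain ⟨ξ, η, ζ, hne, hξ, hη, hζ, k, hk⟩ := exists_mul_dvd_sq_add_mul_sq_sub_mul_sq hd hr hrd hc
  have hd0 : (0 : ℤ) < d := by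
    have : d ≠ 0 := by rintro rfl; exact hd ⟨0, rfl⟩
    positivity
  have hrd0 : (0 : ℤ) < r * d := by nlinarith [sq_nonneg η]
  -- the bounds put `r d k` strictly between `-r d` and `2 r d`
  have hk01 : k = 0 ∨ k = 1 := by
    have hk2 : (r * d : ℤ) * k < r * d * 2 := by nlinarith [sq_nonneg ζ]
    have hk1 : (r * d : ℤ) * (-1) < r * d * k := by nlinarith [sq_nonneg ξ, sq_nonneg η]
    have := lt_of_mul_lt_mul_left hk2 hrd0.le
    have := lt_of_mul_lt_mul_left hk1 hrd0.le
    omega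
  have hN : ξ ^ 2 + d * η ^ 2 = r * (ζ ^ 2 + d * k ^ 2) := by
    rcases hk01 with rfl | rfl <;> linear_combination hk
  refine ⟨ξ.natAbs, η.natAbs, ζ.natAbs, k.natAbs, ?_, ?_⟩ <;> zify <;> simp only [sq_abs]
  · intro h0
    have hζ0 : ζ ^ 2 = 0 := by nlinarith [sq_nonneg ζ, sq_nonneg k]
    have hk0 : k ^ 2 = 0 := by nlinarith [sq_nonneg ζ, sq_nonneg k]
    have hξ0 : ξ ^ 2 = 0 := by nlinarith [sq_nonneg ξ, sq_nonneg η]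
    have hη0 : η ^ 2 = 0 := by nlinarith [sq_nonneg ξ, sq_nonneg η]
    simp_all
  · exact hN

theorem infinite_setOf_liouvilleFun_sq_add_eq_neg_one {d : ℕ} (hd : ¬IsSquare d) :
    {n : ℕ | 0 < n ∧ liouvilleFun (n ^ 2 + d) = -1}.Infinite := by
  by_contra hfin
  have hd0 : d ≠ 0 := by rintro rfl; exact hd ⟨0, rfl⟩
  have hall : ∀ n, 0 < n → liouvilleFun (n ^ 2 + d) = 1 := fun n hn =>
    (liouvilleFun_eq_one_or_eq_neg_one _).resolve_right fun h =>
      hfin (infinite_setOf_liouvilleFun_sq_add_eq_neg_one_of_mem hn h)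
  obtain ⟨r, hr, -, hrd⟩ := Nat.exists_prime_gt_modEq_one 0 (mul_ne_zero four_ne_zero hd0)
  have := Fact.mk hr
  obtain ⟨c, hc⟩ := isSquare_neg_natCast_of_modEq_one d hrd
  obtain ⟨x, y, z, w, hN, hxy⟩ := exists_sq_add_mul_sq_eq_mul hd hr.prime.not_isSquare
    (hrd.of_mul_left 4) (c := c) (by rw [sq, ← hc])
  have hform := liouvilleFun_sq_add_mul_sq_eq_one hd0 hall x y
  rw [hxy, liouvilleFun_prime_mul hr hN, liouvilleFun_sq_add_mul_sq_eq_one hd0 hall z w] at hform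
  norm_num at hform

theorem liouville_neg_infinitely_often_sq_add_general (d : ℕ)
    (hsf : Squarefree d) (hpf : 2 ≤ d.primeFactors.card) :
    {n : ℕ | 0 < n ∧ liouvilleFun (n ^ 2 + d) = -1}.Infinite := by
  refine infinite_setOf_liouvilleFun_sq_add_eq_neg_one fun ⟨k, hk⟩ => ?_
  obtain rfl : k = 1 := Nat.isUnit_iff.mp (hsf k ⟨1, by rw [hk, mul_one]⟩)
  simp [hk] at hpf

theorem liouville_neg_infinitely_often_sq_add (d : ℕ) (hd : 0 < d)
    (hsf : Squarefree d) (hpf : 2 ≤ d.primeFactors.card) :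
    {n : ℕ | 0 < n ∧ liouvilleFun (n ^ 2 + d) = -1}.Infinite :=
  liouville_neg_infinitely_often_sq_add_general d hsf hpf
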